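/- arXiv:1012.1451 — 2 statements merged into one kernel-verified Lean document; each statement's English description precedes it below -/
import Mathlib

section
/- Let L be a finite graded lattice of rank n ≥ 2 whose proper part has nonzero (n-2)-nd reduced homology over k, and let c be a coatom of L with H̃_{n-3}(Δ(0̂,c); k) = 0. Let M = J ∪ {1̂}, where J is the order ideal of L generated by all coatoms other than c. Then M is a graded lattice of rank n and H̃_{n-2}(Δ(M \ {0̂,1̂}); k) ≅ H̃_{n-2}(Δ(L \ {0̂,1̂}); k) ≠ 0. -/
set_option maxSynthPendingDepth 2

open Finset

variable {α : Type*}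

/-- A `j`-vertex simplex of the order complex of `s ⊆ α`: a strictly increasing
`j`-tuple of elements of `s` (for `j = 0` this is the unique empty simplex). -/
def OrderedSimplex [Preorder α] (s : Set α) (j : ℕ) : Type _ :=
  {f : Fin j → α // StrictMono f ∧ ∀ i, f i ∈ s}

/-- The module of simplicial chains with `j` vertices (i.e. of degree `j - 1`)
of the order complex of `s`, with coefficients in `K`.  Since degree `j = 0`
corresponds to the empty simplex, this is the *augmented* chain complex. -/
abbrev SimpChains (K : Type*) [CommRing K] [Preorder α] (s : Set α) (j : ℕ) :=
  OrderedSimplex s j →₀ K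

/-- The `i`-th face of a simplex (delete the `i`-th vertex). -/
def OrderedSimplex.face [Preorder α] {s : Set α} {j : ℕ}
    (σ : OrderedSimplex s (j + 1)) (i : Fin (j + 1)) : OrderedSimplex s j :=
  ⟨σ.1 ∘ Fin.succAbove i, σ.2.1.comp (Fin.strictMono_succAbove i), fun _ => σ.2.2 _⟩

/-- The simplicial boundary map (for `j = 0` it is the augmentation). -/
noncomputable def simpBoundary (K : Type*) [CommRing K] [Preorder α] (s : Set α) (j : ℕ) :
    SimpChains K s (j + 1) →ₗ[K] SimpChains K s j :=
  Finsupp.lsum K fun σ => ∑ i : Fin (j + 1), ((-1 : K) ^ (i : ℕ)) • Finsupp.lsingle (σ.face i)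

/-- Cycles with `j` vertices (for `j = 0` every chain is a cycle). -/
noncomputable def simpCycles (K : Type*) [CommRing K] [Preorder α] (s : Set α) :
    (j : ℕ) → Submodule K (SimpChains K s j)
  | 0 => ⊤
  | (i + 1) => LinearMap.ker (simpBoundary K s i)

/-- Boundaries with `j` vertices. -/
noncomputable def simpBoundaries (K : Type*) [CommRing K] [Preorder α] (s : Set α) (j : ℕ) :
    Submodule K (SimpChains K s j) :=
  LinearMap.range (simpBoundary K s j)

/-- `ReducedHomology K s j` is the reduced simplicial homology group
`H̃_{j-1}(Δ(s); K)` of the order complex of `s` (the index `j` counts vertices,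
so `j = 0` gives `H̃₋₁` and `j = n - 1` gives `H̃_{n-2}`). -/
noncomputable def ReducedHomology (K : Type*) [CommRing K] [Preorder α] (s : Set α) (j : ℕ) :=
  ↥(simpCycles K s j) ⧸ (simpBoundaries K s j).comap (simpCycles K s j).subtype

noncomputable instance (K : Type*) [CommRing K] [Preorder α] (s : Set α) (j : ℕ) :
    AddCommGroup (ReducedHomology K s j) := by unfold ReducedHomology; infer_instance

noncomputable instance (K : Type*) [CommRing K] [Preorder α] (s : Set α) (j : ℕ) :
    Module K (ReducedHomology K s j) := by unfold ReducedHomology; infer_instance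

/-- The proper part `L ∖ {⊥, ⊤}` of a bounded poset. -/
def properPart (α : Type*) [Preorder α] [BoundedOrder α] : Set α :=
  {x | x ≠ ⊥ ∧ x ≠ ⊤}

/-- The flag `f`-vector entry `f_P(S)`: the number of chains in the proper part
of `P` whose set of ranks is exactly `S`. -/
noncomputable def flagf (α : Type*) [Preorder α] [BoundedOrder α] [GradeMinOrder ℕ α]
    (S : Finset ℕ) : ℕ :=
  Nat.card {C : Finset α // IsChain (· ≤ ·) (C : Set α) ∧ (↑C ⊆ properPart α) ∧
    C.image (grade ℕ) = S}

/-- The multinomial coefficient `α_n(S) = n! / (s₁!·(s₂-s₁)!⋯(n-s_l)!)`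
for `S = {s₁ < s₂ < ⋯ < s_l} ⊆ [n-1]`; it equals `f_{B_n}(S)`. -/
def alphaMulti (n : ℕ) (S : Finset ℕ) : ℕ :=
  n.factorial /
    ((S.sort (· ≤ ·) ++ [n]).zipWith (fun b a => (b - a).factorial)
      (0 :: S.sort (· ≤ ·))).prod

/-- An element `x` of a graded bounded poset is *good* if `x = ⊥` or the order
complex of the open interval `(⊥, x)` has nontrivial top reduced homology
`H̃_{ρ(x)-2}` over `K`. -/
def IsGoodElement (K : Type*) [CommRing K] [Preorder α] [OrderBot α] [GradeMinOrder ℕ α]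
    (x : α) : Prop :=
  x = ⊥ ∨ Nontrivial (ReducedHomology K (Set.Ioo (⊥ : α) x) (grade ℕ x - 1))

/-!
Let `T` be the set of elements of the proper part that lie below no coatom other than `c`, so that
the proper part of `M` is the proper part of `L` minus `T`. Put the elements of `T` back one at a
time in order of increasing rank: each `t` is then maximal, so the new complex is the old one
glued to the cone over the link `Δ(s ∩ (0̂, t))`, and by Mayer–Vietoris `H̃_{n-2}` does not change
as long as the link has no cycles in dimensions `n - 3` and `n - 2`. For `t ≠ c` the rank of `t`
is at most `n - 2`, so the link has dimension below `n - 3`; for `t = c` the link is a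
subcomplex of `Δ(0̂, c)`, which has dimension `n - 3` and `H̃_{n-3} = 0`.

`M` is a lower set plus `1̂`, which gives meets and joins, and every gap in a chain of `M` that is
not a cover in `L` can be filled inside `M`, so maximal chains of `M` are maximal chains of `L`.
-/

namespace OrderedSimplex

variable [Preorder α] {s u : Set α} {k : ℕ}

def inclusion (h : s ⊆ u) (σ : OrderedSimplex s k) : OrderedSimplex u k :=
  ⟨σ.1, σ.2.1, fun i => h (σ.2.2 i)⟩

theorem inclusion_injective (h : s ⊆ u) : Function.Injective (inclusion (k := k) h) :=
  fun _ _ hστ => Subtype.ext (congrArg (fun ρ : OrderedSimplex u k => ρ.1) hστ)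

theorem face_inclusion (h : s ⊆ u) (σ : OrderedSimplex s (k + 1)) (i : Fin (k + 1)) :
    (inclusion h σ).face i = inclusion h (σ.face i) := rfl

variable {t : α}

theorem strictMono_snoc {f : Fin k → α} (hf : StrictMono f) (hlt : ∀ i, f i < t) :
    StrictMono (Fin.snoc f t : Fin (k + 1) → α) := by
  intro i j hij
  obtain ⟨i, rfl⟩ := Fin.exists_castSucc_eq.2 (hij.trans_le (Fin.le_last _)).ne
  induction j using Fin.lastCases with
  | last => simpa using hlt i
  | cast j => simpa using hf (Fin.castSucc_lt_castSucc_iff.1 hij)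

/-- The cone over a simplex of the link `s ∩ (-∞, t)`, with apex `t`. -/
def snoc (σ : OrderedSimplex (s ∩ Set.Iio t) k) (ht : t ∈ s) : OrderedSimplex s (k + 1) :=
  ⟨Fin.snoc σ.1 t, strictMono_snoc σ.2.1 fun i => (σ.2.2 i).2, fun i => by
    induction i using Fin.lastCases with
    | last => simpa using ht
    | cast i => simpa using (σ.2.2 i).1⟩

theorem snoc_last (σ : OrderedSimplex (s ∩ Set.Iio t) k) (ht : t ∈ s) :
    (snoc σ ht).1 (Fin.last k) = t := by
  simp [snoc]

theorem snoc_injective (ht : t ∈ s) :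
    Function.Injective fun σ : OrderedSimplex (s ∩ Set.Iio t) k => snoc σ ht := by
  intro σ τ hστ
  exact Subtype.ext (funext fun i => by
    simpa [snoc] using congrArg (fun ρ : OrderedSimplex s (k + 1) => ρ.1 i.castSucc) hστ)

theorem exists_snoc_eq (ht : t ∈ s) (σ : OrderedSimplex s (k + 1))
    (hσ : σ.1 (Fin.last k) = t) : ∃ τ, snoc τ ht = σ := by
  refine ⟨⟨Fin.init σ.1, σ.2.1.comp Fin.strictMono_castSucc,
    fun i => ⟨σ.2.2 _, hσ ▸ σ.2.1 (Fin.castSucc_lt_last i)⟩⟩, Subtype.ext ?_⟩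
  subst hσ
  exact Fin.snoc_init_self _

theorem face_snoc_castSucc (σ : OrderedSimplex (s ∩ Set.Iio t) (k + 1)) (ht : t ∈ s)
    (i : Fin (k + 1)) : (snoc σ ht).face i.castSucc = snoc (σ.face i) ht := by
  refine Subtype.ext (funext fun j => ?_)
  induction j using Fin.lastCases with
  | last => simp [face, snoc, Fin.succAbove_castSucc_of_le _ _ (Fin.le_last i)]
  | cast j => simp [face, snoc, Fin.castSucc_succAbove_castSucc]

theorem face_snoc_last (σ : OrderedSimplex (s ∩ Set.Iio t) k) (ht : t ∈ s) :
    (snoc σ ht).face (Fin.last k) = inclusion Set.inter_subset_left σ :=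
  Subtype.ext (funext fun j => by simp [face, snoc, inclusion])

theorem vertex_ne_of_last_ne (hmax : Maximal (· ∈ s) t) (σ : OrderedSimplex s (k + 1))
    (hσ : σ.1 (Fin.last k) ≠ t) (i : Fin (k + 1)) : σ.1 i ≠ t := by
  intro hi
  rcases (Fin.le_last i).lt_or_eq with hlt | rfl
  · exact hmax.not_gt (σ.2.2 _) (hi ▸ σ.2.1 hlt)
  · exact hσ hi

theorem exists_inclusion_eq (hmax : Maximal (· ∈ s) t) (σ : OrderedSimplex s (k + 1))
    (hσ : σ.1 (Fin.last k) ≠ t) : ∃ τ : OrderedSimplex (s \ {t}) (k + 1),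
      inclusion Set.sdiff_subset τ = σ :=
  ⟨⟨σ.1, σ.2.1, fun i => ⟨σ.2.2 i, vertex_ne_of_last_ne hmax σ hσ i⟩⟩, rfl⟩

end OrderedSimplex

section Chains

variable {K : Type*} [CommRing K] [Preorder α] {s u : Set α} {t : α} {k j : ℕ}

variable (K) in
noncomputable def simpChainsMap (h : s ⊆ u) (k : ℕ) : SimpChains K s k →ₗ[K] SimpChains K u k :=
  Finsupp.lmapDomain K K (OrderedSimplex.inclusion h)

theorem simpChainsMap_single (h : s ⊆ u) (σ : OrderedSimplex s k) (b : K) :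
    simpChainsMap K h k (Finsupp.single σ b) = Finsupp.single (σ.inclusion h) b :=
  Finsupp.mapDomain_single

theorem simpChainsMap_injective (h : s ⊆ u) (k : ℕ) :
    Function.Injective (simpChainsMap K h k) :=
  Finsupp.mapDomain_injective (OrderedSimplex.inclusion_injective h)

theorem simpBoundary_single (σ : OrderedSimplex s (k + 1)) (b : K) :
    simpBoundary K s k (Finsupp.single σ b) =
      ∑ i : Fin (k + 1), ((-1 : K) ^ (i : ℕ)) • Finsupp.single (σ.face i) b := by
  simp [simpBoundary]

theorem simpBoundary_simpChainsMap (h : s ⊆ u) (z : SimpChains K s (k + 1)) :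
    simpBoundary K u k (simpChainsMap K h (k + 1) z) =
      simpChainsMap K h k (simpBoundary K s k z) := by
  suffices simpBoundary K u k ∘ₗ simpChainsMap K h (k + 1) =
      simpChainsMap K h k ∘ₗ simpBoundary K s k from DFunLike.congr_fun this z
  refine Finsupp.lhom_ext fun σ b => ?_
  simp only [LinearMap.comp_apply, simpChainsMap_single, simpBoundary_single, map_sum, map_smul,
    OrderedSimplex.face_inclusion]

theorem mem_simpCycles_succ {z : SimpChains K s (j + 1)} :
    z ∈ simpCycles K s (j + 1) ↔ simpBoundary K s j z = 0 :=
  Iff.rfl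

theorem simpChainsMap_mem_simpCycles (h : s ⊆ u) {z : SimpChains K s j}
    (hz : z ∈ simpCycles K s j) : simpChainsMap K h j z ∈ simpCycles K u j := by
  cases j with
  | zero => exact Submodule.mem_top
  | succ j =>
    rw [mem_simpCycles_succ] at hz ⊢
    rw [simpBoundary_simpChainsMap, hz, map_zero]

theorem simpCycles_eq_bot_of_subset (h : s ⊆ u) (hu : simpCycles K u j = ⊥) :
    simpCycles K s j = ⊥ := by
  refine (Submodule.eq_bot_iff _).2 fun z hz => simpChainsMap_injective h j ?_
  have := simpChainsMap_mem_simpCycles h hz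
  rwa [hu, Submodule.mem_bot, ← map_zero (simpChainsMap K h j)] at this

theorem simpCycles_eq_bot_of_isEmpty [IsEmpty (OrderedSimplex s j)] :
    simpCycles K s j = ⊥ :=
  Submodule.eq_bot_of_subsingleton

theorem simpCycles_eq_bot_of_subsingleton [Subsingleton (ReducedHomology K s j)]
    [IsEmpty (OrderedSimplex s (j + 1))] : simpCycles K s j = ⊥ := by
  refine (Submodule.eq_bot_iff _).2 fun z hz => ?_
  have : (Submodule.Quotient.mk ⟨z, hz⟩ : ReducedHomology K s j) = 0 :=
    Subsingleton.elim (α := ReducedHomology K s j) _ _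
  rw [Submodule.Quotient.mk_eq_zero] at this
  obtain ⟨w, hw⟩ := this
  rw [Subsingleton.elim w 0, map_zero] at hw
  exact hw.symm

theorem nonempty_orderedSimplex_of_nontrivial [Nontrivial (ReducedHomology K s j)] :
    Nonempty (OrderedSimplex s j) := by
  by_contra h
  rw [not_nonempty_iff] at h
  refine not_subsingleton (ReducedHomology K s j) ⟨fun a b => ?_⟩
  obtain ⟨x, rfl⟩ := Submodule.Quotient.mk_surjective _ a
  obtain ⟨y, rfl⟩ := Submodule.Quotient.mk_surjective _ b
  rw [Subsingleton.elim x y]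

variable (K) in
noncomputable def ReducedHomology.map (h : s ⊆ u) (j : ℕ) :
    ReducedHomology K s j →ₗ[K] ReducedHomology K u j :=
  Submodule.mapQ _ _ ((simpChainsMap K h j).restrict fun _ => simpChainsMap_mem_simpCycles h)
    fun z ⟨w, hw⟩ => ⟨simpChainsMap K h (j + 1) w, by
      rw [simpBoundary_simpChainsMap, hw]; rfl⟩

variable (K) in
/-- The coefficients of the simplices of `s` that end at `t`, read as a chain of the link. -/
noncomputable def linkPart (ht : t ∈ s) (k : ℕ) :
    SimpChains K s (k + 1) →ₗ[K] SimpChains K (s ∩ Set.Iio t) k :=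
  Finsupp.lcomapDomain _ (OrderedSimplex.snoc_injective ht)

theorem linkPart_apply (ht : t ∈ s) (z : SimpChains K s (k + 1))
    (τ : OrderedSimplex (s ∩ Set.Iio t) k) : linkPart K ht k z τ = z (τ.snoc ht) :=
  rfl

theorem linkPart_single_snoc (ht : t ∈ s) (τ : OrderedSimplex (s ∩ Set.Iio t) k) (b : K) :
    linkPart K ht k (Finsupp.single (τ.snoc ht) b) = Finsupp.single τ b :=
  Finsupp.comapDomain_single _ _ _ _

theorem linkPart_single_of_last_ne (ht : t ∈ s) (σ : OrderedSimplex s (k + 1))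
    (hσ : σ.1 (Fin.last k) ≠ t) (b : K) : linkPart K ht k (Finsupp.single σ b) = 0 := by
  ext τ
  rw [linkPart_apply, Finsupp.single_eq_of_ne, Finsupp.zero_apply]
  rintro rfl
  exact hσ (OrderedSimplex.snoc_last τ ht)

theorem linkPart_simpChainsMap (ht : t ∈ s) (a : SimpChains K (s \ {t}) (k + 1)) :
    linkPart K ht k (simpChainsMap K Set.sdiff_subset (k + 1) a) = 0 := by
  suffices linkPart K ht k ∘ₗ simpChainsMap K Set.sdiff_subset (k + 1) = 0 from
    DFunLike.congr_fun this a
  refine Finsupp.lhom_ext fun τ b => ?_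
  simpa [simpChainsMap_single] using
    linkPart_single_of_last_ne ht (τ.inclusion Set.sdiff_subset) (τ.2.2 (Fin.last k)).2 b

end Chains

section Deletion

variable {K : Type*} [CommRing K] [Preorder α] {s : Set α} {t : α} {k : ℕ}

theorem linkPart_simpBoundary (hmax : Maximal (· ∈ s) t) (z : SimpChains K s (k + 2)) :
    linkPart K hmax.1 k (simpBoundary K s (k + 1) z) =
      simpBoundary K (s ∩ Set.Iio t) k (linkPart K hmax.1 (k + 1) z) := by
  suffices linkPart K hmax.1 k ∘ₗ simpBoundary K s (k + 1) =
      simpBoundary K (s ∩ Set.Iio t) k ∘ₗ linkPart K hmax.1 (k + 1) from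
    DFunLike.congr_fun this z
  refine Finsupp.lhom_ext fun σ b => ?_
  simp only [LinearMap.comp_apply, simpBoundary_single, map_sum, map_smul]
  by_cases hσ : σ.1 (Fin.last (k + 1)) = t
  · obtain ⟨τ, rfl⟩ := OrderedSimplex.exists_snoc_eq hmax.1 σ hσ
    -- the face opposite the apex lies in the link, so it does not contribute
    rw [Fin.sum_univ_castSucc, OrderedSimplex.face_snoc_last,
      linkPart_single_of_last_ne hmax.1 _ (τ.2.2 (Fin.last k)).2.ne, smul_zero, add_zero,
      linkPart_single_snoc, simpBoundary_single]
    simp only [OrderedSimplex.face_snoc_castSucc, linkPart_single_snoc, Fin.val_castSucc]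
  · rw [linkPart_single_of_last_ne hmax.1 σ hσ, map_zero]
    refine Finset.sum_eq_zero fun i _ => ?_
    rw [linkPart_single_of_last_ne hmax.1 (σ.face i)
      (OrderedSimplex.vertex_ne_of_last_ne hmax σ hσ _), smul_zero]

theorem linkPart_mem_simpCycles (hmax : Maximal (· ∈ s) t) {z : SimpChains K s (k + 1)}
    (hz : z ∈ simpCycles K s (k + 1)) :
    linkPart K hmax.1 k z ∈ simpCycles K (s ∩ Set.Iio t) k := by
  cases k with
  | zero => exact Submodule.mem_top
  | succ k =>
    rw [mem_simpCycles_succ] at hz ⊢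
    rw [← linkPart_simpBoundary hmax, hz, map_zero]

theorem exists_simpChainsMap_eq_of_linkPart_eq_zero (hmax : Maximal (· ∈ s) t)
    {z : SimpChains K s (k + 1)} (hz : linkPart K hmax.1 k z = 0) :
    ∃ a, simpChainsMap K (Set.sdiff_subset : s \ {t} ⊆ s) (k + 1) a = z := by
  refine ⟨Finsupp.comapDomain _ z (OrderedSimplex.inclusion_injective _).injOn,
    Finsupp.mapDomain_comapDomain _ (OrderedSimplex.inclusion_injective _) z fun σ hσ => ?_⟩
  by_cases hlast : σ.1 (Fin.last k) = t
  · obtain ⟨τ, rfl⟩ := OrderedSimplex.exists_snoc_eq hmax.1 σ hlast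
    exact absurd (by simpa [linkPart_apply] using DFunLike.congr_fun hz τ)
      (Finsupp.mem_support_iff.1 hσ)
  · exact OrderedSimplex.exists_inclusion_eq hmax σ hlast

/-- Mayer–Vietoris for `Δ(s) = Δ(s ∖ {t}) ∪ (t * Δ(s ∩ (-∞, t)))`, the second piece a cone. -/
theorem bijective_reducedHomologyMap_diff_singleton (hmax : Maximal (· ∈ s) t) (m : ℕ)
    (h₀ : simpCycles K (s ∩ Set.Iio t) m = ⊥) (h₁ : simpCycles K (s ∩ Set.Iio t) (m + 1) = ⊥) :
    Function.Bijective (ReducedHomology.map K (Set.sdiff_subset : s \ {t} ⊆ s) (m + 1)) := by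
  constructor
  · refine (injective_iff_map_eq_zero _).2 fun x hx => ?_
    obtain ⟨⟨a, ha⟩, rfl⟩ := Submodule.Quotient.mk_surjective _ x
    obtain ⟨w, hw⟩ := (Submodule.Quotient.mk_eq_zero _).1 hx
    have hwlink : linkPart K hmax.1 (m + 1) w ∈ simpCycles K (s ∩ Set.Iio t) (m + 1) := by
      rw [mem_simpCycles_succ, ← linkPart_simpBoundary hmax, hw]
      exact linkPart_simpChainsMap hmax.1 a
    rw [h₁, Submodule.mem_bot] at hwlink
    obtain ⟨v, rfl⟩ := exists_simpChainsMap_eq_of_linkPart_eq_zero hmax hwlink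
    rw [simpBoundary_simpChainsMap] at hw
    exact (Submodule.Quotient.mk_eq_zero _).2 ⟨v, simpChainsMap_injective _ _ hw⟩
  · intro y
    obtain ⟨⟨z, hz⟩, rfl⟩ := Submodule.Quotient.mk_surjective _ y
    have hzlink := linkPart_mem_simpCycles hmax hz
    rw [h₀, Submodule.mem_bot] at hzlink
    obtain ⟨a, rfl⟩ := exists_simpChainsMap_eq_of_linkPart_eq_zero hmax hzlink
    have ha : a ∈ simpCycles K (s \ {t}) (m + 1) := by
      rw [mem_simpCycles_succ] at hz ⊢
      exact simpChainsMap_injective Set.sdiff_subset m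
        (by rw [← simpBoundary_simpChainsMap, hz, map_zero])
    exact ⟨Submodule.Quotient.mk ⟨a, ha⟩, rfl⟩

end Deletion

theorem OrderedSimplex.le_of_forall_grade_mem [Preorder α] [GradeOrder ℕ α] {s : Set α}
    {a b k : ℕ} (hs : ∀ x ∈ s, grade ℕ x ∈ Finset.Icc a b) (σ : OrderedSimplex s k) :
    k ≤ b + 1 - a := by
  simpa using Finset.card_le_card_of_injOn (s := Finset.univ) (t := Finset.Icc a b)
    (grade ℕ ∘ σ.1) (fun i _ => hs _ (σ.2.2 i)) (grade_strictMono.comp σ.2.1).injective.injOn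

section Graded

variable {K : Type*} [CommRing K] [PartialOrder α] [BoundedOrder α] [GradeMinOrder ℕ α]

theorem isEmpty_orderedSimplex_Ioo_bot {t : α} {k : ℕ} (hk : grade ℕ t ≤ k) (hk₀ : k ≠ 0) :
    IsEmpty (OrderedSimplex (Set.Ioo ⊥ t) k) := by
  refine ⟨fun σ => ?_⟩
  have := σ.le_of_forall_grade_mem (a := 1) (b := grade ℕ t - 1) fun x hx => by
    have h₁ := grade_strictMono (𝕆 := ℕ) hx.1
    have h₂ := grade_strictMono (𝕆 := ℕ) hx.2
    simp only [grade_bot, Nat.bot_eq_zero] at h₁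
    exact Finset.mem_Icc.2 ⟨h₁, by omega⟩
  omega

theorem nonempty_reducedHomology_diff_singleton_equiv_of_grade {n : ℕ} {c : α}
    (hc : grade ℕ c = n - 1) (hcbad : Subsingleton (ReducedHomology K (Set.Ioo ⊥ c) (n - 2)))
    {s : Set α} (hs : ⊥ ∉ s) {t : α} (hmax : Maximal (· ∈ s) t)
    (ht : t = c ∨ grade ℕ t + 2 ≤ n) :
    Nonempty (ReducedHomology K (s \ {t}) (n - 1) ≃ₗ[K] ReducedHomology K s (n - 1)) := by
  have hlink : s ∩ Set.Iio t ⊆ Set.Ioo ⊥ t := fun x hx =>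
    ⟨bot_lt_iff_ne_bot.2 (ne_of_mem_of_not_mem hx.1 hs), hx.2⟩
  have hlink_eq_bot : ∀ k, grade ℕ t ≤ k → k ≠ 0 → simpCycles K (s ∩ Set.Iio t) k = ⊥ :=
    fun k hk hk₀ =>
      have := isEmpty_orderedSimplex_Ioo_bot hk hk₀
      have := (OrderedSimplex.inclusion (k := k) hlink).isEmpty
      simpCycles_eq_bot_of_isEmpty
  have ht₁ : 0 < grade ℕ t := by
    simpa using grade_strictMono (𝕆 := ℕ) (bot_lt_iff_ne_bot.2 (ne_of_mem_of_not_mem hmax.1 hs))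
  obtain ⟨m, rfl⟩ : ∃ m, n = m + 2 := ⟨n - 2, by rcases ht with rfl | ht <;> omega⟩
  simp only [Nat.add_sub_cancel] at hc hcbad ⊢
  refine ⟨.ofBijective _ (bijective_reducedHomologyMap_diff_singleton hmax m ?_
    (hlink_eq_bot _ (by rcases ht with rfl | ht <;> omega) (by omega)))⟩
  rcases ht with rfl | ht
  · have := isEmpty_orderedSimplex_Ioo_bot (k := m + 1) hc.le (by omega)
    exact simpCycles_eq_bot_of_subset hlink simpCycles_eq_bot_of_subsingleton
  · exact hlink_eq_bot _ (by omega) (by omega)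

theorem nonempty_reducedHomology_properPart_inter_equiv [Finite α] {n : ℕ} {c : α}
    (hc : grade ℕ c = n - 1) (hcbad : Subsingleton (ReducedHomology K (Set.Ioo ⊥ c) (n - 2)))
    {J : Set α} (hJ : IsLowerSet J) (hJc : ∀ x ∈ properPart α \ J, x = c ∨ grade ℕ x + 2 ≤ n) :
    Nonempty (ReducedHomology K (properPart α ∩ J) (n - 1) ≃ₗ[K]
      ReducedHomology K (properPart α) (n - 1)) := by
  classical
  suffices ∀ E : Finset α, ↑E ⊆ properPart α \ J →
      Nonempty (ReducedHomology K (properPart α ∩ J) (n - 1) ≃ₗ[K]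
        ReducedHomology K (properPart α ∩ J ∪ E) (n - 1)) by
    have := this (Set.toFinite (properPart α \ J)).toFinset (by simp)
    rwa [Set.Finite.coe_toFinset, Set.inter_union_sdiff] at this
  refine fun E => Finset.induction_on_max_value (grade ℕ) E
    (fun _ => by rw [Finset.coe_empty, Set.union_empty]; exact ⟨LinearEquiv.refl K _⟩)
    fun a E haE hgrade ih hE => ?_
  rw [Finset.coe_insert, Set.insert_subset_iff] at hE
  obtain ⟨⟨haP, haJ⟩, hE⟩ := hE
  obtain ⟨e⟩ := ih hE
  have hmax : Maximal (· ∈ properPart α ∩ J ∪ insert a ↑E) a := by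
    refine ⟨Or.inr (Set.mem_insert a _), fun y hy hay => ?_⟩
    rcases hy with hy | rfl | hy
    · exact absurd (hJ hay hy.2) haJ
    · exact le_rfl
    · exact (eq_of_le_of_not_lt hay fun h => (grade_strictMono h).not_ge (hgrade y hy)).ge
  have hsub : properPart α ∩ J ∪ insert a ↑E ⊆ properPart α :=
    Set.union_subset Set.inter_subset_left (Set.insert_subset haP fun x hx => (hE hx).1)
  have hdiff : (properPart α ∩ J ∪ insert a ↑E) \ {a} = properPart α ∩ J ∪ E := by
    rw [Set.union_sdiff_distrib, Set.insert_sdiff_self_of_notMem (by simpa using haE),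
      Set.sdiff_singleton_eq_self fun h => haJ h.2]
  obtain ⟨e'⟩ := hdiff ▸ nonempty_reducedHomology_diff_singleton_equiv_of_grade (K := K) hc hcbad
    (fun h => (hsub h).1 rfl) hmax (hJc a ⟨haP, haJ⟩)
  exact ⟨Finset.coe_insert a E ▸ e.trans e'⟩

end Graded

section LowerSetUnionTop

variable [Lattice α] [OrderTop α] {J : Set α}

theorem isGreatest_inf_union_top (hJ : IsLowerSet J) {x y : α} (hx : x ∈ J ∪ {⊤})
    (hy : y ∈ J ∪ {⊤}) : IsGreatest {w ∈ J ∪ {⊤} | w ≤ x ∧ w ≤ y} (x ⊓ y) := by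
  refine ⟨⟨?_, inf_le_left, inf_le_right⟩, fun w hw => le_inf hw.2.1 hw.2.2⟩
  rcases hx with hx | rfl
  · exact Or.inl (hJ inf_le_left hx)
  · simpa using hy

theorem exists_isLeast_union_top (hJ : IsLowerSet J) (x y : α) :
    ∃ z, IsLeast {w ∈ J ∪ {⊤} | x ≤ w ∧ y ≤ w} z := by
  by_cases hxy : x ⊔ y ∈ J
  · exact ⟨x ⊔ y, ⟨Or.inl hxy, le_sup_left, le_sup_right⟩, fun w hw => sup_le hw.2.1 hw.2.2⟩
  · refine ⟨⊤, ⟨Or.inr rfl, le_top, le_top⟩, ?_⟩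
    rintro w ⟨hw | rfl, hxw, hyw⟩
    · exact absurd (hJ (sup_le hxw hyw) hw) hxy
    · exact le_rfl

end LowerSetUnionTop

theorem exists_between_lowerClosure_union_top [PartialOrder α] [OrderTop α] {D : Set α}
    (hD : ∀ d ∈ D, d ⋖ ⊤) :
    ∀ x ∈ (lowerClosure D : Set α) ∪ {⊤}, ∀ y ∈ (lowerClosure D : Set α) ∪ {⊤},
      x < y → ¬x ⋖ y → ∃ z ∈ (lowerClosure D : Set α) ∪ {⊤}, x < z ∧ z < y := by
  rintro x hx y (hy | rfl) hxy hcov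
  · obtain ⟨z, hxz, hzy⟩ := (not_covBy_iff hxy).1 hcov
    exact ⟨z, Or.inl ((lowerClosure D).lower hzy.le hy), hxz, hzy⟩
  · obtain ⟨d, hd, hxd⟩ := mem_lowerClosure.1 (hx.resolve_right hxy.ne)
    rcases hxd.lt_or_eq with hxd | rfl
    · exact ⟨d, Or.inl (subset_lowerClosure hd), hxd, (hD d hd).lt⟩
    · exact absurd (hD _ hd) hcov

theorem mem_maximal_chain_of_forall_comparable [LE α] {M : Set α} {C : Finset α} (hCM : ↑C ⊆ M)
    (hC : IsChain (· ≤ ·) (C : Set α))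
    (hmax : ∀ C' : Finset α, ↑C' ⊆ M → IsChain (· ≤ ·) (C' : Set α) → C ⊆ C' → C' = C)
    {z : α} (hz : z ∈ M) (hzC : ∀ w ∈ C, w ≤ z ∨ z ≤ w) : z ∈ C := by
  classical
  have := hmax (insert z C) (by simpa [Set.insert_subset_iff] using ⟨hz, hCM⟩)
    (by rw [Finset.coe_insert]; exact hC.insert fun w hw _ => (hzC w hw).symm)
    (Finset.subset_insert _ _)
  exact this ▸ Finset.mem_insert_self z C

theorem exists_covBy_mem_of_maximal_chain [PartialOrder α] [OrderTop α] {M : Set α} {C : Finset α}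
    (hsat : ∀ x ∈ M, ∀ y ∈ M, x < y → ¬x ⋖ y → ∃ z ∈ M, x < z ∧ z < y)
    (hCM : ↑C ⊆ M) (hC : IsChain (· ≤ ·) (C : Set α))
    (hins : ∀ z ∈ M, (∀ w ∈ C, w ≤ z ∨ z ≤ w) → z ∈ C) (htop : ⊤ ∈ C)
    {x : α} (hx : x ∈ C) (hxt : x ≠ ⊤) : ∃ y ∈ C, x ⋖ y := by
  classical
  obtain ⟨y, hy⟩ := (C.filter (x < ·)).exists_minimal ⟨⊤, Finset.mem_filter.2 ⟨htop, hxt.lt_top⟩⟩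
  obtain ⟨⟨hyC, hxy⟩, hymin⟩ : (y ∈ C ∧ x < y) ∧ ∀ ⦃w⦄, w ∈ C ∧ x < w → w ≤ y → y ≤ w := by
    simpa only [Minimal, Finset.mem_filter] using hy
  refine ⟨y, hyC, by_contra fun hcov => ?_⟩
  obtain ⟨z, hzM, hxz, hzy⟩ := hsat x (hCM hx) y (hCM hyC) hxy hcov
  refine hzy.not_ge (hymin ⟨hins z hzM fun w hw => ?_, hxz⟩ hzy.le)
  rcases hC.total hw hx with hwx | hxw
  · exact Or.inl (hwx.trans hxz.le)
  rcases hxw.lt_or_eq with hxw | rfl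
  · exact Or.inr (hzy.le.trans ((hC.total hw hyC).elim (hymin ⟨hw, hxw⟩) id))
  · exact Or.inl hxz.le

theorem card_eq_grade_top_add_one_of_maximal_chain [PartialOrder α] [BoundedOrder α]
    [GradeMinOrder ℕ α] {M : Set α} {C : Finset α} (hbot : ⊥ ∈ M) (htop : ⊤ ∈ M)
    (hsat : ∀ x ∈ M, ∀ y ∈ M, x < y → ¬x ⋖ y → ∃ z ∈ M, x < z ∧ z < y)
    (hCM : ↑C ⊆ M) (hC : IsChain (· ≤ ·) (C : Set α))
    (hmax : ∀ C' : Finset α, ↑C' ⊆ M → IsChain (· ≤ ·) (C' : Set α) → C ⊆ C' → C' = C) :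
    C.card = grade ℕ (⊤ : α) + 1 := by
  have hins := fun z hz hzC => mem_maximal_chain_of_forall_comparable hCM hC hmax (z := z) hz hzC
  have htopC : ⊤ ∈ C := hins ⊤ htop fun _ _ => Or.inl le_top
  have hgrade : ∀ i ≤ grade ℕ (⊤ : α), ∃ x ∈ C, grade ℕ x = i := by
    intro i hi
    induction i with
    | zero => exact ⟨⊥, hins ⊥ hbot fun _ _ => Or.inr bot_le, by simp⟩
    | succ i ih =>
      obtain ⟨x, hxC, rfl⟩ := ih (by omega)
      obtain ⟨y, hyC, hxy⟩ := exists_covBy_mem_of_maximal_chain hsat hCM hC hins htopC hxC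
        (by rintro rfl; omega)
      exact ⟨y, hyC, (Nat.covBy_iff_add_one_eq.1 (hxy.grade ℕ)).symm⟩
  have himage : C.image (grade ℕ) = Finset.range (grade ℕ (⊤ : α) + 1) := by
    ext i
    simp only [Finset.mem_image, Finset.mem_range]
    refine ⟨?_, fun hi => hgrade i (by omega)⟩
    rintro ⟨x, -, rfl⟩
    exact Nat.lt_succ_of_le (grade_mono le_top)
  rw [← Finset.card_range (grade ℕ (⊤ : α) + 1), ← himage, Finset.card_image_of_injOn]
  intro x hx y hy hxy
  rcases hC.total hx hy with h | h
  · exact eq_of_le_of_not_lt h fun hlt => (grade_strictMono hlt).ne hxy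
  · exact (eq_of_le_of_not_lt h fun hlt => (grade_strictMono hlt).ne hxy.symm).symm

/-- Deleting a bad coatom `c`: with `M = J ∪ {⊤}`, where `J` is the order ideal
generated by the coatoms other than `c`, the subposet `M` is a graded lattice of rank
`n` (every pair has a meet and a join in `M`, and every maximal chain of `M` has
`n + 1` elements) and `H̃_{n-2}(Δ(M∖{⊥,⊤}); K) ≅ H̃_{n-2}(Δ(L∖{⊥,⊤}); K) ≠ 0`. -/
theorem coatom_deletion
    (n : ℕ) (hn : 2 ≤ n)
    (α : Type*) [Lattice α] [BoundedOrder α] [Fintype α] [GradeMinOrder ℕ α]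
    (hrank : grade ℕ (⊤ : α) = n)
    (K : Type*) [Field K]
    (hH : Nontrivial (ReducedHomology K (properPart α) (n - 1)))
    (c : α) (hc : grade ℕ c = n - 1)
    (hcbad : Subsingleton (ReducedHomology K (Set.Ioo (⊥ : α) c) (n - 2)))
    (M : Set α)
    (hM : M = {x | ∃ d, grade ℕ d = n - 1 ∧ d ≠ c ∧ x ≤ d} ∪ {⊤}) :
    (∀ x ∈ M, ∀ y ∈ M,
        (∃ z, IsGreatest {w ∈ M | w ≤ x ∧ w ≤ y} z) ∧
        (∃ z, IsLeast {w ∈ M | x ≤ w ∧ y ≤ w} z)) ∧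
    (∀ C : Finset α, ↑C ⊆ M → IsChain (· ≤ ·) (C : Set α) →
        (∀ C' : Finset α, ↑C' ⊆ M → IsChain (· ≤ ·) (C' : Set α) → C ⊆ C' → C' = C) →
        C.card = n + 1) ∧
    Nonempty (ReducedHomology K (M \ {⊥, ⊤} : Set α) (n - 1) ≃ₗ[K]
        ReducedHomology K (properPart α) (n - 1)) ∧
    Nontrivial (ReducedHomology K (M \ {⊥, ⊤} : Set α) (n - 1)) := by
  set D : Set α := {d | grade ℕ d = n - 1 ∧ d ≠ c}
  set J : Set α := ↑(lowerClosure D)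
  have hJ : IsLowerSet J := (lowerClosure D).lower
  have hMJ : M = J ∪ {⊤} := by
    rw [hM]; ext x; simp [J, D, and_assoc]
  clear hM
  subst hMJ
  have hDcov : ∀ d ∈ D, d ⋖ ⊤ := fun d ⟨hd, _⟩ => by
    have hdt : d < ⊤ := lt_top_iff_ne_top.2 fun h => by rw [h, hrank] at hd; omega
    exact covBy_iff_lt_covBy_grade.2 ⟨hdt, Nat.covBy_iff_add_one_eq.2 (by rw [hd, hrank]; omega)⟩
  have hproper : (J ∪ {⊤}) \ {⊥, ⊤} = properPart α ∩ J := by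
    ext x; simp [properPart]; tauto
  obtain ⟨e⟩ : Nonempty (ReducedHomology K ((J ∪ {⊤}) \ {⊥, ⊤}) (n - 1) ≃ₗ[K]
      ReducedHomology K (properPart α) (n - 1)) := by
    rw [hproper]
    refine nonempty_reducedHomology_properPart_inter_equiv hc hcbad hJ fun x ⟨⟨_, hxt⟩, hxJ⟩ => ?_
    have : grade ℕ x < n := hrank ▸ grade_strictMono hxt.lt_top
    by_contra! h
    exact hxJ (subset_lowerClosure ⟨by omega, h.1⟩)
  have hnt := e.toEquiv.nontrivial
  have hbot : ⊥ ∈ J ∪ {⊤} := by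
    obtain ⟨σ⟩ := nonempty_orderedSimplex_of_nontrivial (K := K)
      (s := (J ∪ {⊤}) \ {⊥, ⊤}) (j := n - 1)
    have hx : σ.1 ⟨0, by omega⟩ ∈ properPart α ∩ J := hproper ▸ σ.2.2 _
    exact Or.inl (hJ bot_le hx.2)
  refine ⟨fun x hx y hy => ⟨⟨x ⊓ y, isGreatest_inf_union_top hJ hx hy⟩,
    exists_isLeast_union_top hJ x y⟩, fun C hCM hC hmax => ?_, ⟨e⟩, hnt⟩
  exact hrank ▸ card_eq_grade_top_add_one_of_maximal_chain hbot (Or.inr rfl)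
    (exists_between_lowerClosure_union_top hDcov) hCM hC hmax
end

section
/- Let L be a finite graded lattice of rank n whose proper part has nonzero (n-2)-nd reduced homology over k. For all integers 0 ≤ r ≤ k ≤ n and every order ideal I of L \ {1̂} generated by at most r elements, there exist at least binom(n-r, k-r) good elements of L of rank k that do not belong to I. -/
set_option maxSynthPendingDepth 2

open Finset

variable {α : Type*}

/-!
A nonzero class of `H̃_{n-2}` of the proper part is a nonzero top cycle `z` of the order complex,
supported on maximal chains. The boundary of `z` vanishes on each codimension-one face, and the
maximal chains containing such a face differ in one position only: so every chain of the support
can be changed in each interior position without leaving the support, and restricting `z` to the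
chains that agree with a given one above `x` gives a nonzero top cycle of `(0̂, x)`, i.e. `x` is
good. In a lattice, every element of such a closed family of flags is the meet of the coatoms of
the family above it, which forces at least `n` coatoms; one of them, `c`, avoids the ideal, and
the good elements below `c` together with those outside the ideal generated by `G` and `c` give
Pascal's recurrence for `binom(n - r, k - r)`.
-/

section Flags

variable [Preorder α] [GradeOrder ℕ α]

/-- Only the values at positions `0, …, m` matter. -/
structure IsFlag (m : ℕ) (t : α) (f : ℕ → α) : Prop where
  grade_apply : ∀ j ≤ m, grade ℕ (f j) = j
  apply_le_succ : ∀ j < m, f j ≤ f (j + 1)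
  apply_length : f m = t

/-- The shape of the support of a top-dimensional cycle of the order complex. -/
structure IsClosedFlagFamily (m : ℕ) (t : α) (M : Set (ℕ → α)) : Prop where
  nonempty : M.Nonempty
  isFlag : ∀ f ∈ M, IsFlag m t f
  exchange : ∀ f ∈ M, ∀ j, 0 < j → j < m → ∃ y ≠ f j, Function.update f j y ∈ M

variable {m : ℕ} {t : α} {f : ℕ → α} {M : Set (ℕ → α)}

lemma IsFlag.monotoneOn (hf : IsFlag m t f) : MonotoneOn f (Set.Iic m) :=
  monotoneOn_of_le_succ Set.ordConnected_Iic fun j _ _ hj =>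
    hf.apply_le_succ j (Order.succ_le_iff.1 hj)

lemma IsFlag.restrict (hf : IsFlag (m + 1) t f) : IsFlag m (f m) f :=
  ⟨fun j hj => hf.grade_apply j (by omega), fun j hj => hf.apply_le_succ j (by omega), rfl⟩

namespace IsClosedFlagFamily

lemma restrict (hM : IsClosedFlagFamily (m + 1) t M) {c : α} (hc : c ∈ Function.eval m '' M) :
    IsClosedFlagFamily m c {f ∈ M | f m = c} := by
  obtain ⟨f, hf, rfl⟩ := hc
  refine ⟨⟨f, hf, rfl⟩, fun g hg => hg.2 ▸ (hM.isFlag g hg.1).restrict, ?_⟩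
  rintro g ⟨hg, hgc⟩ j hj0 hjm
  obtain ⟨y, hy, hyM⟩ := hM.exchange g hg j hj0 (by omega)
  exact ⟨y, hy, hyM, by rw [Function.update_of_ne (by omega), hgc]⟩

lemma apply_le_of_mem_restrict (hM : IsClosedFlagFamily (m + 1) t M) {c : α}
    (hf : f ∈ {f ∈ M | f m = c}) {k : ℕ} (hk : k ≤ m) : f k ≤ c :=
  hf.2 ▸ (hM.isFlag f hf.1).monotoneOn (Set.mem_Iic.2 (by omega)) (Set.mem_Iic.2 (by omega)) hk

end IsClosedFlagFamily

end Flags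

section PartialOrder

variable [PartialOrder α] [GradeOrder ℕ α]

lemma eq_of_le_of_grade_le {x y : α} (hxy : x ≤ y) (h : grade ℕ y ≤ grade ℕ x) : x = y :=
  hxy.eq_of_not_lt fun hlt => (grade_strictMono (𝕆 := ℕ) hlt).not_ge h

lemma IsFlag.apply_lt_apply_length {m : ℕ} {t : α} {f : ℕ → α} (hf : IsFlag (m + 1) t f) :
    f m < t := by
  refine lt_of_le_of_ne (hf.apply_length ▸ hf.apply_le_succ m (by omega)) fun h => ?_
  have := hf.grade_apply m (by omega)
  rw [h, ← hf.apply_length, hf.grade_apply (m + 1) le_rfl] at this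
  omega

end PartialOrder

section Lattice

variable [Lattice α] [GradeOrder ℕ α] {m : ℕ} {t : α} {f : ℕ → α} {M : Set (ℕ → α)}

lemma IsFlag.apply_eq_inf (hf : IsFlag m t f) {j : ℕ} (hj : j < m) {y : α}
    (hg : IsFlag m t (Function.update f (j + 1) y)) (hy : y ≠ f (j + 1)) :
    f j = f (j + 1) ⊓ y := by
  have hfy : f j ≤ y := by simpa using hg.apply_le_succ j hj
  have hgrade : grade ℕ y = j + 1 := by simpa using hg.grade_apply (j + 1) hj
  have hlt : f (j + 1) ⊓ y < f (j + 1) := inf_le_left.lt_of_ne fun h =>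
    hy (eq_of_le_of_grade_le (h ▸ inf_le_right) (by rw [hgrade, hf.grade_apply _ hj])).symm
  refine eq_of_le_of_grade_le (le_inf (hf.apply_le_succ j hj) hfy) ?_
  have := grade_strictMono (𝕆 := ℕ) hlt
  rw [hf.grade_apply _ hj] at this
  rw [hf.grade_apply j hj.le]
  omega

namespace IsClosedFlagFamily

lemma isGLB (hM : IsClosedFlagFamily (m + 1) t M) (hf : f ∈ M) {j : ℕ} (hj : j ≤ m) :
    IsGLB (Function.eval m '' M ∩ Set.Ici (f j)) (f j) := by
  induction hj using Nat.decreasingInduction generalizing f with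
  | self => exact ⟨fun c hc => hc.2, fun z hz => hz ⟨⟨f, hf, rfl⟩, le_rfl⟩⟩
  | of_succ j hj ih =>
    obtain ⟨y, hy, hyM⟩ := hM.exchange f hf (j + 1) (by omega) (by omega)
    have hmeet := (hM.isFlag f hf).apply_eq_inf (by omega) (hM.isFlag _ hyM) hy
    have hfy : f j ≤ y := hmeet ▸ inf_le_right
    refine ⟨fun c hc => hc.2, fun z hz => hmeet ▸ le_inf ((ih hf).2 ?_) ?_⟩
    · exact fun c hc => hz ⟨hc.1, ((hM.isFlag f hf).apply_le_succ j (by omega)).trans hc.2⟩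
    · simpa using (ih hyM).2 fun c hc => hz ⟨hc.1, hfy.trans (by simpa using hc.2)⟩

variable [Finite α]

lemma le_ncard_inter_Ici (hM : IsClosedFlagFamily (m + 1) t M) (hf : f ∈ M) {j : ℕ}
    (hj : j ≤ m) : m + 1 - j ≤ (Function.eval m '' M ∩ Set.Ici (f j)).ncard := by
  induction hj using Nat.decreasingInduction with
  | self =>
    rw [Nat.add_sub_cancel_left]
    exact (Set.ncard_pos (Set.toFinite _)).2 ⟨f m, ⟨f, hf, rfl⟩, le_rfl⟩
  | of_succ j hj ih =>
    have hle : f j ≤ f (j + 1) := (hM.isFlag f hf).apply_le_succ j (by omega)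
    have hne : f j ≠ f (j + 1) := fun h => by
      have := congrArg (grade ℕ) h
      rw [(hM.isFlag f hf).grade_apply j (by omega),
        (hM.isFlag f hf).grade_apply (j + 1) (by omega)] at this
      omega
    have hssub : Function.eval m '' M ∩ Set.Ici (f (j + 1)) ⊂
        Function.eval m '' M ∩ Set.Ici (f j) :=
      ssubset_of_subset_of_ne (Set.inter_subset_inter_right _ (Set.Ici_subset_Ici.2 hle))
        fun h => hne ((hM.isGLB hf hj.le).unique (h ▸ hM.isGLB hf hj))
    have := Set.ncard_lt_ncard hssub
    omega

lemma le_ncard_level (hM : IsClosedFlagFamily (m + 1) t M) :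
    m + 1 ≤ (Function.eval m '' M).ncard := by
  obtain ⟨f, hf⟩ := hM.nonempty
  exact (hM.le_ncard_inter_Ici hf (Nat.zero_le m)).trans (Set.ncard_le_ncard Set.inter_subset_left)

/-- An element `f m` below some `g` with `¬ t ≤ g` is `t ⊓ g`, so `G` catches at most `#G` of
them. -/
lemma exists_level_forall_not_le (hM : IsClosedFlagFamily (m + 1) t M) {G : Finset α}
    (hG : G.card ≤ m) (hGt : ∀ g ∈ G, ¬ t ≤ g) :
    ∃ c ∈ Function.eval m '' M, ∀ g ∈ G, ¬ c ≤ g := by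
  by_contra! h
  have hsub : Function.eval m '' M ⊆ (t ⊓ ·) '' G := by
    intro c hc
    obtain ⟨g, hg, hcg⟩ := h c hc
    obtain ⟨f, hf, rfl⟩ := hc
    have hft := (hM.isFlag f hf).apply_lt_apply_length
    have hlt : t ⊓ g < t := inf_le_left.lt_of_ne fun h' => hGt g hg (inf_eq_left.1 h')
    refine ⟨g, hg, (eq_of_le_of_grade_le (le_inf hft.le hcg) ?_).symm⟩
    have hgt := (hM.isFlag f hf).grade_apply (m + 1) le_rfl
    rw [(hM.isFlag f hf).apply_length] at hgt
    have := grade_strictMono (𝕆 := ℕ) hlt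
    rw [(hM.isFlag f hf).grade_apply m (by omega)]
    omega
  have := (Set.ncard_le_ncard hsub).trans (Set.ncard_image_le (Finset.finite_toSet G))
  rw [Set.ncard_coe_finset] at this
  have := hM.le_ncard_level
  omega

end IsClosedFlagFamily

open Classical in
/-- Choose `c = f (m - 1)` outside the ideal of `G`: the elements below `c` and those outside
the ideal of `insert c G` are disjoint, and induction gives Pascal's recurrence. -/
theorem IsClosedFlagFamily.choose_le_ncard [Finite α] {m : ℕ} {t : α} {M : Set (ℕ → α)}
    (hM : IsClosedFlagFamily m t M) {r k : ℕ} (hrk : r ≤ k) (hkm : k ≤ m)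
    (G : Finset α) (hG : G.card ≤ r) (hGt : ∀ g ∈ G, ¬ t ≤ g) :
    (m - r).choose (k - r) ≤ {x ∈ Function.eval k '' M | ∀ g ∈ G, ¬ x ≤ g}.ncard := by
  rcases hkm.eq_or_lt with rfl | hkm
  · obtain ⟨f, hf⟩ := hM.nonempty
    have ht : t ∈ {x ∈ Function.eval k '' M | ∀ g ∈ G, ¬ x ≤ g} :=
      ⟨⟨f, hf, (hM.isFlag f hf).apply_length⟩, hGt⟩
    rw [Nat.choose_self]
    exact (Set.ncard_pos (Set.toFinite _)).2 ⟨t, ht⟩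
  obtain ⟨m, rfl⟩ : ∃ m', m = m' + 1 := ⟨m - 1, by omega⟩
  obtain ⟨c, hc, hcG⟩ := hM.exists_level_forall_not_le (G := G) (by omega) hGt
  set below := {x ∈ Function.eval k '' {f ∈ M | f m = c} | ∀ g ∈ G, ¬ x ≤ g}
  have hbelow : (m - r).choose (k - r) ≤ below.ncard :=
    IsClosedFlagFamily.choose_le_ncard (hM.restrict hc) hrk (by omega) G hG hcG
  have hbelow_sub : below ⊆ {x ∈ Function.eval k '' M | ∀ g ∈ G, ¬ x ≤ g} :=
    fun x ⟨⟨f, hf, hfx⟩, hx⟩ => ⟨⟨f, hf.1, hfx⟩, hx⟩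
  rcases hrk.eq_or_lt with rfl | hrk
  · rw [Nat.sub_self, Nat.choose_zero_right] at hbelow ⊢
    exact hbelow.trans (Set.ncard_le_ncard hbelow_sub)
  have hct : ¬ t ≤ c := by
    obtain ⟨f, hf, rfl⟩ := hc
    exact (hM.isFlag f hf).apply_lt_apply_length.not_ge
  set above := {x ∈ Function.eval k '' M | ∀ g ∈ insert c G, ¬ x ≤ g}
  have habove : (m + 1 - (r + 1)).choose (k - (r + 1)) ≤ above.ncard :=
    IsClosedFlagFamily.choose_le_ncard hM hrk hkm.le (insert c G)
      ((Finset.card_insert_le _ _).trans (by omega))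
      (Finset.forall_mem_insert _ _ _ |>.2 ⟨hct, hGt⟩)
  have hdisj : Disjoint below above := Set.disjoint_left.2 fun x ⟨⟨f, hf, hfx⟩, _⟩ hx =>
    hx.2 c (Finset.mem_insert_self c G) (hfx ▸ hM.apply_le_of_mem_restrict hf (by omega))
  have hunion : below ∪ above ⊆ {x ∈ Function.eval k '' M | ∀ g ∈ G, ¬ x ≤ g} :=
    Set.union_subset hbelow_sub fun x hx =>
      ⟨hx.1, fun g hg => hx.2 g (Finset.mem_insert_of_mem hg)⟩
  have hpascal : (m + 1 - r).choose (k - r) =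
      (m - r).choose (k - r) + (m + 1 - (r + 1)).choose (k - (r + 1)) := by
    rw [show m + 1 - r = m - r + 1 by omega, show k - r = k - (r + 1) + 1 by omega,
      Nat.choose_succ_succ', show m + 1 - (r + 1) = m - r by omega, add_comm]
  calc (m + 1 - r).choose (k - r) ≤ below.ncard + above.ncard := hpascal ▸ add_le_add hbelow habove
    _ = (below ∪ above).ncard := (Set.ncard_union_eq hdisj).symm
    _ ≤ _ := Set.ncard_le_ncard hunion
termination_by m + (k - r)

end Lattice

lemma Fin.val_succAbove {j : ℕ} (i : Fin (j + 1)) (p : Fin j) :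
    (i.succAbove p : ℕ) = if (p : ℕ) < i then (p : ℕ) else p + 1 := by
  rcases lt_or_ge (p : ℕ) i with h | h
  · rw [Fin.succAbove_of_castSucc_lt _ _ h, if_pos h, Fin.val_castSucc]
  · rw [Fin.succAbove_of_le_castSucc _ _ h, if_neg (not_lt.2 h), Fin.val_succ]

lemma StrictMono.apply_add_sub_le {j : ℕ} {f : Fin j → ℕ} (hf : StrictMono f) {p q : Fin j}
    (hpq : p ≤ q) : f p + (q - p) ≤ f q := by
  obtain ⟨q, hq⟩ := q
  induction q with
  | zero =>
    obtain rfl : p = ⟨0, hq⟩ := Fin.ext (Nat.le_zero.1 hpq)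
    simp
  | succ q ih =>
    rcases (Fin.le_def.1 hpq).eq_or_lt with h | h
    · obtain rfl : p = ⟨q + 1, hq⟩ := Fin.ext h
      simp
    · have h1 := ih (by omega) (Fin.le_def.2 (by simp only at h ⊢; omega))
      have h2 := hf (Fin.mk_lt_mk.2 (Nat.lt_succ_self q) : (⟨q, by omega⟩ : Fin j) < ⟨q + 1, hq⟩)
      simp only at h1 h2 ⊢
      omega

namespace OrderedSimplex

section Preorder

variable [Preorder α] {s : Set α} {j : ℕ}

@[ext]
lemma ext {σ τ : OrderedSimplex s j} (h : ∀ p, σ.1 p = τ.1 p) : σ = τ :=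
  Subtype.ext (funext h)

lemma face_apply (σ : OrderedSimplex s (j + 1)) (i : Fin (j + 1)) (p : Fin j) :
    (σ.face i).1 p = σ.1 (i.succAbove p) :=
  rfl

def EqExcept (σ τ : OrderedSimplex s j) (l : ℕ) : Prop :=
  ∀ p : Fin j, (p : ℕ) ≠ l → σ.1 p = τ.1 p

lemma EqExcept.refl (σ : OrderedSimplex s j) (l : ℕ) : σ.EqExcept σ l :=
  fun _ _ => rfl

lemma eq_of_eqExcept {σ τ : OrderedSimplex s j} {l : Fin j} (h : σ.EqExcept τ l)
    (hl : σ.1 l = τ.1 l) : σ = τ :=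
  ext fun p => if hp : p = l then hp ▸ hl else h p (Fin.val_ne_of_ne hp)

lemma face_eq_face_iff {σ τ : OrderedSimplex s (j + 1)} {i : Fin (j + 1)} :
    σ.face i = τ.face i ↔ σ.EqExcept τ i := by
  refine ⟨fun h p hp => ?_, fun h => ext fun p => h _ (Fin.val_ne_of_ne (i.succAbove_ne p))⟩
  obtain ⟨q, rfl⟩ := Fin.exists_succAbove_eq (Fin.ne_of_val_ne hp)
  exact congrArg (fun ρ : OrderedSimplex s j => ρ.1 q) h

variable [GradeOrder ℕ α]

def IsFullFlag (σ : OrderedSimplex s j) : Prop :=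
  ∀ p, grade ℕ (σ.1 p) = p + 1

lemma IsFullFlag.grade_face_apply {σ : OrderedSimplex s (j + 1)} (hσ : σ.IsFullFlag)
    (i : Fin (j + 1)) (p : Fin j) :
    grade ℕ ((σ.face i).1 p) = if (p : ℕ) < i then (p : ℕ) + 1 else p + 2 := by
  rw [face_apply, hσ, Fin.val_succAbove]
  split_ifs <;> rfl

/-- A face of a full flag remembers the rank it misses. -/
lemma IsFullFlag.eq_of_face_eq_face {σ τ : OrderedSimplex s (j + 1)} (hσ : σ.IsFullFlag)
    (hτ : τ.IsFullFlag) {i l : Fin (j + 1)} (h : σ.face i = τ.face l) : i = l := by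
  by_contra hne
  have hmin : min (i : ℕ) l < j := by omega
  have := hσ.grade_face_apply i ⟨_, hmin⟩
  rw [h, hτ.grade_face_apply l] at this
  simp only at this
  split_ifs at this <;> omega

end Preorder

end OrderedSimplex

section Boundary

open OrderedSimplex
open scoped Classical

variable [Preorder α] {K : Type*} [CommRing K] {s : Set α} {j : ℕ}

lemma simpBoundary_apply (z : SimpChains K s (j + 1)) (ψ : OrderedSimplex s j) :
    simpBoundary K s j z ψ =
      ∑ i : Fin (j + 1), (-1) ^ (i : ℕ) * ∑ σ ∈ z.support with σ.face i = ψ, z σ := by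
  simp only [simpBoundary, Finsupp.lsum_apply, Finsupp.sum, Finsupp.finsetSum_apply,
    LinearMap.sum_apply, LinearMap.smul_apply, Finsupp.lsingle_apply, Finsupp.smul_apply,
    Finsupp.single_apply, smul_eq_mul, Finset.sum_filter, Finset.mul_sum]
  exact Finset.sum_comm

/-- Sum over the *line* of `σ₁` at `l`: the simplices sharing with `σ₁` its face opposite vertex
`l`. -/
noncomputable def lineSum (z : SimpChains K s j) (σ₁ : OrderedSimplex s j) (l : ℕ) : K :=
  ∑ σ ∈ z.support with σ.EqExcept σ₁ l, z σ

variable {z : SimpChains K s j}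

lemma exists_ne_eqExcept_of_lineSum_eq_zero {σ₁ : OrderedSimplex s j} {l : ℕ}
    (h : lineSum z σ₁ l = 0) (hσ₁ : σ₁ ∈ z.support) :
    ∃ σ ∈ z.support, σ ≠ σ₁ ∧ σ.EqExcept σ₁ l := by
  by_contra! hne
  refine Finsupp.mem_support_iff.1 hσ₁ ?_
  rw [← h, lineSum, Finset.sum_eq_single_of_mem σ₁ (Finset.mem_filter.2 ⟨hσ₁, EqExcept.refl σ₁ l⟩)]
  exact fun σ hσ hσne => absurd (Finset.mem_filter.1 hσ).2 (hne σ (Finset.mem_filter.1 hσ).1 hσne)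

variable [GradeOrder ℕ α]

lemma simpBoundary_apply_face {z : SimpChains K s (j + 1)} (hfull : ∀ σ ∈ z.support, σ.IsFullFlag)
    {σ₁ : OrderedSimplex s (j + 1)} (hσ₁ : σ₁.IsFullFlag) (i : Fin (j + 1)) :
    simpBoundary K s j z (σ₁.face i) = (-1) ^ (i : ℕ) * lineSum z σ₁ i := by
  rw [simpBoundary_apply, Finset.sum_eq_single i, lineSum]
  · simp only [face_eq_face_iff]
  · intro i' _ hi'
    rw [Finset.sum_eq_zero fun σ hσ => absurd
      ((hfull σ (Finset.mem_filter.1 hσ).1).eq_of_face_eq_face hσ₁ (Finset.mem_filter.1 hσ).2) hi',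
      mul_zero]
  · exact fun hi => absurd (Finset.mem_univ i) hi

lemma mem_simpCycles_iff (hfull : ∀ σ ∈ z.support, σ.IsFullFlag) :
    z ∈ simpCycles K s j ↔ ∀ σ₁ ∈ z.support, ∀ l < j, lineSum z σ₁ l = 0 := by
  cases j with
  | zero => simp [simpCycles]
  | succ j =>
    change z ∈ LinearMap.ker _ ↔ _
    rw [LinearMap.mem_ker]
    constructor
    · intro hz σ₁ hσ₁ l hl
      have := simpBoundary_apply_face hfull (hfull σ₁ hσ₁) ⟨l, hl⟩
      rwa [hz, Finsupp.coe_zero, Pi.zero_apply, eq_comm, neg_one_pow_mul_eq_zero_iff] at this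
    · intro h
      ext ψ
      by_cases hψ : ∃ σ₁ ∈ z.support, ∃ i, σ₁.face i = ψ
      · obtain ⟨σ₁, hσ₁, i, rfl⟩ := hψ
        rw [simpBoundary_apply_face hfull (hfull σ₁ hσ₁) i, h σ₁ hσ₁ i i.2, mul_zero]
        rfl
      · simp only [not_exists, not_and] at hψ
        rw [simpBoundary_apply]
        refine Finset.sum_eq_zero fun i _ => ?_
        rw [Finset.filter_false_of_mem fun σ hσ => hψ σ hσ i, Finset.sum_empty, mul_zero]

end Boundary

section Homology

variable {K : Type*} [CommRing K] [Preorder α] {s : Set α} {j : ℕ}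

lemma exists_mem_simpCycles_ne_zero (h : Nontrivial (ReducedHomology K s j)) :
    ∃ z ∈ simpCycles K s j, z ≠ 0 := by
  obtain ⟨x, hx⟩ := exists_ne (0 : ReducedHomology K s j)
  obtain ⟨⟨z, hz⟩, rfl⟩ := Submodule.Quotient.mk_surjective _ x
  refine ⟨z, hz, ?_⟩
  rintro rfl
  exact hx rfl

/-- Without simplices one dimension up there are no boundaries, so a nonzero cycle survives. -/
lemma nontrivial_reducedHomology [IsEmpty (OrderedSimplex s (j + 1))] {z : SimpChains K s j}
    (hz : z ∈ simpCycles K s j) (hz0 : z ≠ 0) : Nontrivial (ReducedHomology K s j) := by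
  refine nontrivial_of_ne (Submodule.Quotient.mk ⟨z, hz⟩ : ReducedHomology K s j) 0 ?_
  intro h
  obtain ⟨v, hv⟩ := (Submodule.Quotient.mk_eq_zero _).1 h
  exact hz0 (by simpa [Subsingleton.elim v 0] using hv.symm)

end Homology

namespace OrderedSimplex

section Graded

variable [Preorder α] [GradeOrder ℕ α] {s : Set α} {j : ℕ}

lemma grade_bounds {a b : α} (hs : s ⊆ Set.Ioo a b) (σ : OrderedSimplex s j) (p : Fin j) :
    grade ℕ a + p < grade ℕ (σ.1 p) ∧ grade ℕ (σ.1 p) + (j - 1 - p) < grade ℕ b := by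
  have hj : 0 < j := p.pos
  have hmono : StrictMono (grade ℕ ∘ σ.1) := grade_strictMono.comp σ.2.1
  have hfirst := hmono.apply_add_sub_le (Fin.le_def.2 (Nat.zero_le p) : ⟨0, by omega⟩ ≤ p)
  have hlast :=
    hmono.apply_add_sub_le (Fin.le_def.2 (Nat.le_sub_one_of_lt p.2) : p ≤ ⟨j - 1, by omega⟩)
  have ha := grade_strictMono (𝕆 := ℕ) (hs (σ.2.2 ⟨0, by omega⟩)).1
  have hb := grade_strictMono (𝕆 := ℕ) (hs (σ.2.2 ⟨j - 1, by omega⟩)).2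
  simp only [Function.comp_apply] at hfirst hlast
  omega

end Graded

variable [Preorder α] [OrderBot α] [GradeMinOrder ℕ α] {s : Set α} {j : ℕ} {b : α}

lemma isFullFlag_of_subset_Ioo (hs : s ⊆ Set.Ioo ⊥ b) (hb : grade ℕ b = j + 1)
    (σ : OrderedSimplex s j) : σ.IsFullFlag := fun p => by
  have := σ.grade_bounds hs p
  rw [grade_bot, Nat.bot_eq_zero, hb] at this
  omega

lemma isEmpty_of_subset_Ioo (hs : s ⊆ Set.Ioo ⊥ b) (hb : grade ℕ b = j + 1) :
    IsEmpty (OrderedSimplex s (j + 1)) := by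
  refine ⟨fun σ => ?_⟩
  have := σ.grade_bounds hs (Fin.last j)
  rw [grade_bot, Nat.bot_eq_zero, hb, Fin.val_last] at this
  omega

end OrderedSimplex

lemma properPart_eq_Ioo [PartialOrder α] [BoundedOrder α] : properPart α = Set.Ioo ⊥ ⊤ := by
  ext x
  simp [properPart, bot_lt_iff_ne_bot, lt_top_iff_ne_top]

namespace OrderedSimplex

variable [PartialOrder α] [BoundedOrder α] {N : ℕ} (σ₀ : OrderedSimplex (properPart α) N)
  (i₀ : Fin N)

def glueBelow (τ : OrderedSimplex (Set.Ioo ⊥ (σ₀.1 i₀)) i₀) : OrderedSimplex (properPart α) N := by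
  refine ⟨fun p => if h : (p : ℕ) < i₀ then τ.1 ⟨p, h⟩ else σ₀.1 p, fun p q hpq => ?_, fun p => ?_⟩
  · dsimp only
    split_ifs with hp hq hq
    · exact τ.2.1 (Fin.mk_lt_mk.2 hpq)
    · exact (τ.2.2 _).2.trans_le (σ₀.2.1.monotone (Fin.le_def.2 (not_lt.1 hq)))
    · exact absurd ((Fin.lt_def.1 hpq).trans hq) hp
    · exact σ₀.2.1 hpq
  · dsimp only
    split_ifs
    · exact ⟨(τ.2.2 _).1.ne', ne_top_of_lt (τ.2.2 _).2⟩
    · exact σ₀.2.2 p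

variable {σ₀ i₀}

lemma glueBelow_apply_of_lt (τ : OrderedSimplex (Set.Ioo ⊥ (σ₀.1 i₀)) i₀) {p : Fin N}
    (hp : (p : ℕ) < i₀) : (σ₀.glueBelow i₀ τ).1 p = τ.1 ⟨p, hp⟩ :=
  dif_pos hp

lemma glueBelow_apply_of_le (τ : OrderedSimplex (Set.Ioo ⊥ (σ₀.1 i₀)) i₀) {p : Fin N}
    (hp : i₀ ≤ p) : (σ₀.glueBelow i₀ τ).1 p = σ₀.1 p :=
  dif_neg (not_lt.2 hp)

lemma glueBelow_apply_val (τ : OrderedSimplex (Set.Ioo ⊥ (σ₀.1 i₀)) i₀) (q : Fin i₀) :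
    (σ₀.glueBelow i₀ τ).1 ⟨q, q.2.trans i₀.2⟩ = τ.1 q :=
  glueBelow_apply_of_lt τ q.2

lemma glueBelow_injective : Function.Injective (σ₀.glueBelow i₀) := fun τ τ' h => ext fun q =>
  (glueBelow_apply_val τ q).symm.trans (h ▸ glueBelow_apply_val τ' q)

lemma eqExcept_glueBelow_iff {τ τ' : OrderedSimplex (Set.Ioo ⊥ (σ₀.1 i₀)) i₀} {l : ℕ} :
    (σ₀.glueBelow i₀ τ).EqExcept (σ₀.glueBelow i₀ τ') l ↔ τ.EqExcept τ' l := by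
  refine ⟨fun h q hq => ?_, fun h p hp => ?_⟩
  · exact (glueBelow_apply_val τ q).symm.trans ((h _ hq).trans (glueBelow_apply_val τ' q))
  · rcases lt_or_ge (p : ℕ) i₀ with hpi | hpi
    · exact (glueBelow_apply_of_lt τ hpi).trans ((h _ hp).trans (glueBelow_apply_of_lt τ' hpi).symm)
    · exact (glueBelow_apply_of_le τ hpi).trans (glueBelow_apply_of_le τ' hpi).symm

lemma exists_glueBelow_eq {σ : OrderedSimplex (properPart α) N}
    (h : ∀ p : Fin N, i₀ ≤ p → σ.1 p = σ₀.1 p) : ∃ τ, σ₀.glueBelow i₀ τ = σ := by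
  have hlt (q : Fin i₀) : (⟨q, q.2.trans i₀.2⟩ : Fin N) < i₀ := Fin.lt_def.2 q.2
  refine ⟨⟨fun q => σ.1 ⟨q, q.2.trans i₀.2⟩, fun q q' hqq' => σ.2.1 hqq', fun q =>
    ⟨bot_lt_iff_ne_bot.2 (σ.2.2 _).1, h i₀ le_rfl ▸ σ.2.1 (hlt q)⟩⟩, ext fun p => ?_⟩
  rcases lt_or_ge (p : ℕ) i₀ with hp | hp
  · exact glueBelow_apply_of_lt _ hp
  · exact (glueBelow_apply_of_le _ hp).trans (h p hp).symm

end OrderedSimplex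

section Good

open OrderedSimplex
open scoped Classical

variable {K : Type*} [CommRing K] [PartialOrder α] [BoundedOrder α] {N : ℕ}

/-- A line at a position below `i₀` does not leave the simplices that agree with `σ₀` from `i₀`
on. -/
lemma lineSum_comapDomain_glueBelow (z : SimpChains K (properPart α) N)
    {σ₀ : OrderedSimplex (properPart α) N} {i₀ : Fin N}
    (τ₁ : OrderedSimplex (Set.Ioo ⊥ (σ₀.1 i₀)) i₀) {l : ℕ} (hl : l < i₀) :
    lineSum (z.comapDomain (σ₀.glueBelow i₀) glueBelow_injective.injOn) τ₁ l =
      lineSum z (σ₀.glueBelow i₀ τ₁) l := by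
  rw [lineSum, lineSum, Finset.sum_filter, Finset.sum_filter, Finsupp.comapDomain_support]
  simp only [Finsupp.comapDomain_apply, ← eqExcept_glueBelow_iff (σ₀ := σ₀)]
  refine Finset.sum_preimage _ _ _ (fun σ => if σ.EqExcept (σ₀.glueBelow i₀ τ₁) l then z σ else 0)
    fun σ _ hσ => if_neg fun h => hσ ?_
  exact exists_glueBelow_eq fun p hp =>
    (h p (by have := Fin.le_def.1 hp; omega)).trans (glueBelow_apply_of_le τ₁ hp)

variable [GradeMinOrder ℕ α]

lemma isFullFlag_of_properPart (hrank : grade ℕ (⊤ : α) = N + 1)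
    (σ : OrderedSimplex (properPart α) N) : σ.IsFullFlag :=
  isFullFlag_of_subset_Ioo properPart_eq_Ioo.subset hrank σ

/-- The restriction of the cycle `z` to the flags through `σ₀` above `i₀` is a nonzero top
cycle of `(⊥, σ₀ i₀)`. -/
theorem isGoodElement_of_mem_support (hrank : grade ℕ (⊤ : α) = N + 1)
    {z : SimpChains K (properPart α) N} (hz : z ∈ simpCycles K (properPart α) N)
    {σ₀ : OrderedSimplex (properPart α) N} (hσ₀ : σ₀ ∈ z.support) (i₀ : Fin N) :
    IsGoodElement K (σ₀.1 i₀) := by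
  have hfull σ (_ : σ ∈ z.support) := isFullFlag_of_properPart hrank σ
  have hx : grade ℕ (σ₀.1 i₀) = i₀ + 1 := isFullFlag_of_properPart hrank σ₀ i₀
  set w := z.comapDomain (σ₀.glueBelow i₀) glueBelow_injective.injOn
  have hw : w ∈ simpCycles K _ i₀ := by
    rw [mem_simpCycles_iff fun τ _ => isFullFlag_of_subset_Ioo subset_rfl hx τ]
    intro τ₁ hτ₁ l hl
    rw [lineSum_comapDomain_glueBelow z τ₁ hl]
    exact (mem_simpCycles_iff hfull).1 hz _ (by simpa [w] using hτ₁) l (hl.trans i₀.2)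
  have hw0 : w ≠ 0 := by
    obtain ⟨τ, hτ⟩ := exists_glueBelow_eq (σ₀ := σ₀) (i₀ := i₀) fun _ _ => rfl
    refine fun h => Finsupp.mem_support_iff.1 hσ₀ ?_
    have : w τ = z σ₀ := by simp [w, hτ]
    rw [← this, h, Finsupp.coe_zero, Pi.zero_apply]
  have := isEmpty_of_subset_Ioo (subset_refl (Set.Ioo ⊥ (σ₀.1 i₀))) hx
  exact Or.inr (by rw [hx, Nat.add_sub_cancel]; exact nontrivial_reducedHomology hw hw0)

end Good

namespace OrderedSimplex

variable [PartialOrder α] [BoundedOrder α] {s : Set α} {N : ℕ}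

def toFlag (σ : OrderedSimplex s N) : ℕ → α :=
  fun j => if h₀ : j = 0 then ⊥ else if h : j ≤ N then σ.1 ⟨j - 1, by omega⟩ else ⊤

lemma toFlag_succ (σ : OrderedSimplex s N) (p : Fin N) : σ.toFlag (p + 1) = σ.1 p := by
  simp [toFlag, Nat.succ_le_of_lt p.2]

lemma update_toFlag {σ σ' : OrderedSimplex s N} {l : ℕ} (h : σ'.EqExcept σ l) :
    Function.update σ.toFlag (l + 1) (σ'.toFlag (l + 1)) = σ'.toFlag := by
  funext j
  rcases eq_or_ne j (l + 1) with rfl | hj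
  · exact Function.update_self _ _ _
  · rw [Function.update_of_ne hj]
    unfold toFlag
    split_ifs with h0 hN
    · rfl
    · exact (h ⟨j - 1, by omega⟩ (by simp only; omega)).symm
    · rfl

variable [GradeMinOrder ℕ α]

lemma isFlag_toFlag (hrank : grade ℕ (⊤ : α) = N + 1) (σ : OrderedSimplex (properPart α) N) :
    IsFlag (N + 1) ⊤ σ.toFlag := by
  refine ⟨fun j hj => ?_, fun j hj => ?_, by simp [toFlag]⟩
  · unfold toFlag
    split_ifs with h0 hN
    · simp [h0]
    · rw [isFullFlag_of_properPart hrank σ]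
      simp only
      omega
    · rw [hrank]
      omega
  · unfold toFlag
    split_ifs <;> first | exact bot_le | exact le_top | contradiction | omega |
      exact σ.2.1.monotone (Fin.mk_le_mk.2 (by omega))

end OrderedSimplex

section TopCycle

open OrderedSimplex

variable {K : Type*} [CommRing K] [PartialOrder α] [BoundedOrder α] [GradeMinOrder ℕ α] {N : ℕ}
  {z : SimpChains K (properPart α) N}

lemma isClosedFlagFamily_toFlag (hrank : grade ℕ (⊤ : α) = N + 1)
    (hz : z ∈ simpCycles K (properPart α) N) (hz0 : z ≠ 0) :
    IsClosedFlagFamily (N + 1) ⊤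
      (toFlag '' (z.support : Set (OrderedSimplex (properPart α) N))) := by
  have hfull σ (_ : σ ∈ z.support) := isFullFlag_of_properPart hrank σ
  refine ⟨(Finset.coe_nonempty.2 (Finsupp.support_nonempty_iff.2 hz0)).image _,
    fun _ ⟨σ, _, hσ⟩ => hσ ▸ isFlag_toFlag hrank σ, ?_⟩
  rintro _ ⟨σ, hσ, rfl⟩ j hj0 hjN
  obtain ⟨l, rfl⟩ : ∃ l, j = l + 1 := ⟨j - 1, by omega⟩
  obtain ⟨σ', hσ', hne, heq⟩ := exists_ne_eqExcept_of_lineSum_eq_zero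
    ((mem_simpCycles_iff hfull).1 hz σ hσ l (by omega)) hσ
  refine ⟨σ'.toFlag (l + 1), fun h => hne (eq_of_eqExcept (l := ⟨l, by omega⟩) heq ?_),
    σ', hσ', (update_toFlag heq).symm⟩
  simpa only [toFlag_succ σ' ⟨l, by omega⟩, toFlag_succ σ ⟨l, by omega⟩] using h

lemma isGoodElement_top (hrank : grade ℕ (⊤ : α) = N + 1)
    (hH : Nontrivial (ReducedHomology K (properPart α) N)) : IsGoodElement K (⊤ : α) :=
  Or.inr (by rwa [hrank, Nat.add_sub_cancel, ← properPart_eq_Ioo])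

lemma isGoodElement_toFlag_apply (hrank : grade ℕ (⊤ : α) = N + 1)
    (hH : Nontrivial (ReducedHomology K (properPart α) N)) (hz : z ∈ simpCycles K (properPart α) N)
    {σ : OrderedSimplex (properPart α) N} (hσ : σ ∈ z.support) {j : ℕ} (hj : j ≤ N + 1) :
    IsGoodElement K (σ.toFlag j) := by
  rcases Nat.eq_zero_or_pos j with rfl | hj0
  · exact Or.inl (by simp [toFlag])
  rcases hj.eq_or_lt with rfl | hjN
  · rw [(isFlag_toFlag hrank σ).apply_length]
    exact isGoodElement_top hrank hH
  obtain ⟨p, rfl⟩ : ∃ p, j = p + 1 := ⟨j - 1, by omega⟩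
  rw [toFlag_succ σ ⟨p, by omega⟩]
  exact isGoodElement_of_mem_support hrank hz hσ _

end TopCycle

/-- **Step 4.**  Let `L` be a finite graded lattice of rank `n` whose proper part has
nonzero reduced homology `H̃_{n-2}` over `K`.  For all `0 ≤ r ≤ k ≤ n` and every order
ideal of `L ∖ {⊤}` generated by at most `r` elements (given by a generating set `G`),
at least `binom(n-r, k-r)` good elements of rank `k` avoid the ideal. -/
theorem good_elements_avoiding_ideal
    (n : ℕ) (hn : 1 ≤ n)
    (α : Type*) [Lattice α] [BoundedOrder α] [Fintype α] [GradeMinOrder ℕ α]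
    (hrank : grade ℕ (⊤ : α) = n)
    (K : Type*) [Field K]
    (hH : Nontrivial (ReducedHomology K (properPart α) (n - 1))) :
    ∀ r k : ℕ, r ≤ k → k ≤ n → ∀ G : Finset α, G.card ≤ r → (∀ g ∈ G, g ≠ ⊤) →
      (n - r).choose (k - r) ≤
        Nat.card {x : α // grade ℕ x = k ∧ IsGoodElement K x ∧ ∀ g ∈ G, ¬ x ≤ g} := by
  intro r k hrk hkn G hG hGt
  obtain ⟨N, rfl⟩ : ∃ N, n = N + 1 := ⟨n - 1, by omega⟩
  rw [Nat.add_sub_cancel] at hH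
  obtain ⟨z, hz, hz0⟩ := exists_mem_simpCycles_ne_zero hH
  have hM := isClosedFlagFamily_toFlag hrank hz hz0
  have hgood : {x ∈ Function.eval k ''
      (OrderedSimplex.toFlag '' (z.support : Set (OrderedSimplex (properPart α) N))) |
      ∀ g ∈ G, ¬ x ≤ g} ⊆ {x | grade ℕ x = k ∧ IsGoodElement K x ∧ ∀ g ∈ G, ¬ x ≤ g} := by
    rintro _ ⟨⟨_, ⟨σ, hσ, rfl⟩, rfl⟩, hx⟩
    exact ⟨(OrderedSimplex.isFlag_toFlag hrank σ).grade_apply k hkn,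
      isGoodElement_toFlag_apply hrank hH hz hσ hkn, hx⟩
  calc (N + 1 - r).choose (k - r)
      ≤ _ := hM.choose_le_ncard hrk hkn G hG fun g hg h => hGt g hg (top_le_iff.1 h)
    _ ≤ _ := Set.ncard_le_ncard hgood
    _ = _ := (Nat.card_coe_set_eq _).symm
end
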